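/- arXiv:2102.04628 — 4 statements merged into one kernel-verified Lean document; each statement's English description precedes it below -/
import Mathlib

section
/- For any real γ > 0 and any integer n > 0, the sum ∑_{i=0}^{n} C(n,i) [1/(γ+i)² − 1/((γ+i)(γ+n−i))] is strictly positive. -/
/-! Writing `a i = 1 / (γ + i)`, the summand is `C(n,i) (a i ^ 2 - a i a (n - i))`. Adding the sum
to its reflection `i ↦ n - i` turns it into `∑ C(n,i) (a i - a (n - i)) ^ 2`, whose `i = 0` term
`(1/γ - 1/(γ + n)) ^ 2` is positive. -/

open Finset

section Reflection

variable {R : Type*}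

theorem two_mul_sum_choose_mul_sq_sub_mul_reflect [CommRing R] (a : ℕ → R) (n : ℕ) :
    2 * ∑ i ∈ range (n + 1), (n.choose i : R) * (a i ^ 2 - a i * a (n - i)) =
      ∑ i ∈ range (n + 1), (n.choose i : R) * (a i - a (n - i)) ^ 2 := by
  have reflect : ∑ i ∈ range (n + 1), (n.choose i : R) * (a (n - i) ^ 2 - a (n - i) * a i) =
      ∑ i ∈ range (n + 1), (n.choose i : R) * (a i ^ 2 - a i * a (n - i)) := by
    rw [← sum_range_reflect]
    refine sum_congr rfl fun i hi => ?_
    have hi : i ≤ n := Nat.lt_succ_iff.mp (mem_range.mp hi)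
    rw [add_tsub_cancel_right, Nat.sub_sub_self hi, Nat.choose_symm hi]
  rw [two_mul]
  nth_rewrite 2 [← reflect]
  rw [← sum_add_distrib]
  exact sum_congr rfl fun i _ => by ring

theorem sum_choose_mul_sq_sub_mul_reflect_pos [CommRing R] [LinearOrder R] [IsStrictOrderedRing R]
    (a : ℕ → R) {n : ℕ} (h : a 0 ≠ a n) :
    0 < ∑ i ∈ range (n + 1), (n.choose i : R) * (a i ^ 2 - a i * a (n - i)) := by
  have squares_pos : 0 < ∑ i ∈ range (n + 1), (n.choose i : R) * (a i - a (n - i)) ^ 2 := by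
    refine sum_pos' (fun i _ => by positivity) ⟨0, by simp, ?_⟩
    simpa using sq_pos_of_ne_zero (sub_ne_zero.mpr h)
  rw [← two_mul_sum_choose_mul_sq_sub_mul_reflect] at squares_pos
  exact pos_of_mul_pos_right squares_pos zero_le_two

end Reflection

theorem stmt_0_general (γ : ℝ) (n : ℕ) (hn : 0 < n) :
    0 < ∑ i ∈ Finset.range (n + 1), (n.choose i : ℝ) *
      (1 / (γ + i) ^ 2 - 1 / ((γ + i) * (γ + n - i))) := by
  set a : ℕ → ℝ := fun i => 1 / (γ + i)
  have summand : ∀ i ∈ range (n + 1), (n.choose i : ℝ) *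
      (1 / (γ + i) ^ 2 - 1 / ((γ + i) * (γ + n - i))) =
        n.choose i * (a i ^ 2 - a i * a (n - i)) := by
    intro i hi
    simp only [a, Nat.cast_sub (Nat.lt_succ_iff.mp (mem_range.mp hi)), one_div_pow,
      one_div_mul_one_div, add_sub_assoc]
  have ends_ne : a 0 ≠ a n := by
    simpa [a] using hn.ne'
  rw [sum_congr rfl summand]
  exact sum_choose_mul_sq_sub_mul_reflect_pos a ends_ne

theorem stmt_0 (γ : ℝ) (hγ : 0 < γ) (n : ℕ) (hn : 0 < n) :
    0 < ∑ i ∈ Finset.range (n + 1), (n.choose i : ℝ) *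
      (1 / (γ + i) ^ 2 - 1 / ((γ + i) * (γ + n - i))) :=
  stmt_0_general γ n hn
end

section
/- Let H be a polynomial (or analytic) function on ℝᴺ with H(1,…,1) = 1, let π₀ > 0, and suppose H satisfies the steady-state equation ∑_{i,j} k_{ij}(x^{ν_{ij}} − x_i) ∂H/∂x_i + ∑_j k_{0j} π₀ (x^{ν_{0j}} − 1) = 0 for all x. Then F := exp((H−1)/π₀) satisfies ∑_{i,j} k_{ij}(x^{ν_{ij}} − x_i) ∂F/∂x_i + ∑_j k_{0j}(x^{ν_{0j}} − 1) F = 0 for all x. -/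
open Finset

lemma fderiv_exp_sub_div_apply {E : Type*} [NormedAddCommGroup E] [NormedSpace ℝ E]
    {H : E → ℝ} {x : E} (hH : DifferentiableAt ℝ H x) (a b : ℝ) (v : E) :
    fderiv ℝ (fun y => Real.exp ((H y - a) / b)) x v
      = Real.exp ((H x - a) / b) / b * fderiv ℝ H x v := by
  have hdiv : HasFDerivAt (fun y => (H y - a) / b) (b⁻¹ • fderiv ℝ H x) x := by
    simpa only [div_eq_mul_inv] using (hH.hasFDerivAt.sub_const a).mul_const b⁻¹
  rw [hdiv.exp.fderiv]
  simp only [smul_apply, smul_eq_mul]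
  ring

theorem stmt_11_general (N r₀ : ℕ) (r : Fin N → ℕ)
    (k : (i : Fin N) → Fin (r i) → ℝ)
    (k₀ : Fin r₀ → ℝ)
    (ν : (i : Fin N) → Fin (r i) → Fin N → ℕ) (ν₀ : Fin r₀ → Fin N → ℕ)
    (π₀ : ℝ) (hπ₀ : 0 < π₀)
    (H : (Fin N → ℝ) → ℝ) (hH : ContDiff ℝ 1 H)
    (hsteady : ∀ x : Fin N → ℝ,
      (∑ i, ∑ j, k i j * ((∏ l, x l ^ ν i j l) - x i) * fderiv ℝ H x (Pi.single i 1))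
        + ∑ j, k₀ j * π₀ * ((∏ l, x l ^ ν₀ j l) - 1) = 0) :
    ∀ x : Fin N → ℝ,
      (∑ i, ∑ j, k i j * ((∏ l, x l ^ ν i j l) - x i) *
          fderiv ℝ (fun y => Real.exp ((H y - 1) / π₀)) x (Pi.single i 1))
        + ∑ j, k₀ j * ((∏ l, x l ^ ν₀ j l) - 1) * Real.exp ((H x - 1) / π₀) = 0 := by
  intro x
  set c := Real.exp ((H x - 1) / π₀) / π₀
  have hF : ∀ v, fderiv ℝ (fun y => Real.exp ((H y - 1) / π₀)) x v = c * fderiv ℝ H x v :=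
    fderiv_exp_sub_div_apply (hH.differentiable one_ne_zero x) 1 π₀
  have hc : Real.exp ((H x - 1) / π₀) = c * π₀ := (div_mul_cancel₀ _ hπ₀.ne').symm
  calc _ = c * ((∑ i, ∑ j, k i j * ((∏ l, x l ^ ν i j l) - x i) * fderiv ℝ H x (Pi.single i 1))
          + ∑ j, k₀ j * π₀ * ((∏ l, x l ^ ν₀ j l) - 1)) := by
        simp only [hF, hc, mul_add, mul_sum]
        congr 1 <;> refine sum_congr rfl fun _ _ => ?_
        · exact sum_congr rfl fun _ _ => by ring
        · ring
    _ = 0 := by rw [hsteady x, mul_zero]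

theorem stmt_11 (N r₀ : ℕ) (r : Fin N → ℕ)
    (k : (i : Fin N) → Fin (r i) → ℝ) (hk : ∀ i j, 0 ≤ k i j)
    (k₀ : Fin r₀ → ℝ) (hk₀ : ∀ j, 0 ≤ k₀ j)
    (ν : (i : Fin N) → Fin (r i) → Fin N → ℕ) (ν₀ : Fin r₀ → Fin N → ℕ)
    (π₀ : ℝ) (hπ₀ : 0 < π₀)
    (H : (Fin N → ℝ) → ℝ) (hH : ContDiff ℝ 1 H) (hH1 : H (fun _ => 1) = 1)
    (hsteady : ∀ x : Fin N → ℝ,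
      (∑ i, ∑ j, k i j * ((∏ l, x l ^ ν i j l) - x i) * fderiv ℝ H x (Pi.single i 1))
        + ∑ j, k₀ j * π₀ * ((∏ l, x l ^ ν₀ j l) - 1) = 0) :
    ∀ x : Fin N → ℝ,
      (∑ i, ∑ j, k i j * ((∏ l, x l ^ ν i j l) - x i) *
          fderiv ℝ (fun y => Real.exp ((H y - 1) / π₀)) x (Pi.single i 1))
        + ∑ j, k₀ j * ((∏ l, x l ^ ν₀ j l) - 1) * Real.exp ((H x - 1) / π₀) = 0 :=
  stmt_11_general N r₀ r k k₀ ν ν₀ π₀ hπ₀ H hH hsteady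
end

section
/- Consider the Markov chain on ℕ² with transitions (n₁,n₂) → (n₁+1,n₂+1) at rate k₁, (n₁,n₂) → (n₁+1,n₂) at rate k₂, (n₁,n₂) → (n₁−1,n₂) at rate d₁n₁, and (n₁,n₂) → (n₁,n₂−1) at rate d₂n₂. Then the bivariate Poisson distribution p_{n₁,n₂} = ∑_{i=0}^{min(n₁,n₂)} α₁^{n₁−i}α₂^{n₂−i}α₁₂^i/(i!(n₁−i)!(n₂−i)!) e^{−(α₁+α₂+α₁₂)}, with α₁ = (k₂(d₁+d₂)+k₁d₂)/(d₁(d₁+d₂)), α₂ = k₁d₁/(d₂(d₁+d₂)), α₁₂ = k₁/(d₁+d₂), is stationary: k₁p_{n₁−1,n₂−1} + k₂p_{n₁−1,n₂} + d₁(n₁+1)p_{n₁+1,n₂} + d₂(n₂+1)p_{n₁,n₂+1} = (k₁+k₂+d₁n₁+d₂n₂)p_{n₁,n₂} for all (n₁,n₂) ∈ ℕ². -/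
/-- Bivariate Poisson distribution extended to `ℤ²` (zero for negative indices). -/
noncomputable def bivPoisson (α₁ α₂ α₁₂ : ℝ) (n₁ n₂ : ℤ) : ℝ :=
  if 0 ≤ n₁ ∧ 0 ≤ n₂ then
    (∑ i ∈ Finset.range (min n₁.toNat n₂.toNat + 1),
      α₁ ^ (n₁.toNat - i) * α₂ ^ (n₂.toNat - i) * α₁₂ ^ i /
        (i.factorial * (n₁.toNat - i).factorial * (n₂.toNat - i).factorial)) *
      Real.exp (-(α₁ + α₂ + α₁₂))
  else 0

/-!
The bivariate Poisson law is that of `(X + Z, Y + Z)` for independent Poisson variables of means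
`α₁, α₂, α₁₂`; writing it as `∑ i, w₁₂(i) w₁(n₁ - i) w₂(n₂ - i)` with Poisson weights
`w(k) = αᵏ / k!` and using `k w(k) = α w(k - 1)` on each factor gives the recurrences
`n₁ p(n₁, n₂) = α₁ p(n₁ - 1, n₂) + α₁₂ p(n₁ - 1, n₂ - 1)` and its mirror image. Substituting
them into the balance equation leaves three linear relations between the rates and the `α`s,
which the given parameters satisfy.
-/

open Finset

/-- Extended by zero to negative `k`, so that `k * w k = α * w (k - 1)` holds on all of `ℤ`. -/
noncomputable def poissonWeight (α : ℝ) (k : ℤ) : ℝ :=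
  if 0 ≤ k then α ^ k.toNat / k.toNat.factorial else 0

lemma poissonWeight_of_neg {α : ℝ} {k : ℤ} (hk : k < 0) : poissonWeight α k = 0 :=
  if_neg hk.not_ge

lemma intCast_mul_poissonWeight (α : ℝ) (k : ℤ) :
    (k : ℝ) * poissonWeight α k = α * poissonWeight α (k - 1) := by
  rcases lt_trichotomy k 0 with hk | rfl | hk
  · rw [poissonWeight_of_neg hk, poissonWeight_of_neg (by omega), mul_zero, mul_zero]
  · rw [poissonWeight_of_neg (by norm_num : (0 : ℤ) - 1 < 0)]
    simp
  · obtain ⟨n, rfl⟩ : ∃ n : ℕ, k = n + 1 := ⟨k.toNat - 1, by omega⟩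
    simp only [poissonWeight, add_sub_cancel_right, Int.toNat_natCast, Nat.cast_nonneg,
      if_true, show (0 : ℤ) ≤ n + 1 by omega, show ((n : ℤ) + 1).toNat = n + 1 by omega,
      Nat.factorial_succ, pow_succ]
    push_cast
    field_simp

lemma bivPoisson_swap (α₁ α₂ α₁₂ : ℝ) (a b : ℤ) :
    bivPoisson α₁ α₂ α₁₂ a b = bivPoisson α₂ α₁ α₁₂ b a := by
  unfold bivPoisson
  simp only [and_comm (a := 0 ≤ a), min_comm a.toNat, add_comm α₁ α₂]
  congr 2
  exact sum_congr rfl fun i _ => by ring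

section Recurrence

variable (α₁ α₂ α₁₂ : ℝ)

noncomputable def bivPoissonTerm (a b : ℤ) (i : ℕ) : ℝ :=
  poissonWeight α₁₂ i * poissonWeight α₁ (a - i) * poissonWeight α₂ (b - i)

lemma bivPoisson_eq_sum_bivPoissonTerm {a : ℤ} (b : ℤ) {R : ℕ} (haR : a < R) :
    bivPoisson α₁ α₂ α₁₂ a b =
      (∑ i ∈ range R, bivPoissonTerm α₁ α₂ α₁₂ a b i) * Real.exp (-(α₁ + α₂ + α₁₂)) := by
  unfold bivPoisson bivPoissonTerm
  split_ifs with h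
  · obtain ⟨ha, hb⟩ := h
    congr 1
    refine (sum_congr rfl fun i hi => ?_).trans (sum_subset (fun i hi => ?_) fun i _ hi => ?_)
    · simp only [mem_range] at hi
      have hia : (a - i).toNat = a.toNat - i := by omega
      have hib : (b - i).toNat = b.toNat - i := by omega
      simp only [poissonWeight, Nat.cast_nonneg, if_true, Int.toNat_natCast,
        show 0 ≤ a - i by omega, show 0 ≤ b - i by omega, hia, hib]
      field_simp
    · simp only [mem_range] at hi ⊢
      omega
    · simp only [mem_range, not_lt] at hi
      rcases Int.lt_or_le (a - i) 0 with hai | hai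
      · rw [poissonWeight_of_neg (α := α₁) hai, mul_zero, zero_mul]
      · rw [poissonWeight_of_neg (α := α₂) (by omega), mul_zero]
  · symm
    refine mul_eq_zero_of_left (sum_eq_zero fun i _ => ?_) _
    rcases not_and_or.mp h with ha | hb
    · rw [poissonWeight_of_neg (α := α₁) (by omega), mul_zero, zero_mul]
    · rw [poissonWeight_of_neg (α := α₂) (by omega), mul_zero]

lemma succ_mul_bivPoissonTerm_succ (a b : ℤ) (i : ℕ) :
    ((i + 1 : ℕ) : ℝ) * bivPoissonTerm α₁ α₂ α₁₂ a b (i + 1) =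
      α₁₂ * bivPoissonTerm α₁ α₂ α₁₂ (a - 1) (b - 1) i := by
  have h := intCast_mul_poissonWeight α₁₂ (i + 1)
  push_cast at h ⊢
  rw [add_sub_cancel_right] at h
  unfold bivPoissonTerm
  rw [sub_sub, sub_sub, add_comm 1 (i : ℤ)]
  push_cast
  linear_combination poissonWeight α₁ (a - (i + 1)) * poissonWeight α₂ (b - (i + 1)) * h

lemma sub_mul_bivPoissonTerm (a b : ℤ) (i : ℕ) :
    ((a - i : ℤ) : ℝ) * bivPoissonTerm α₁ α₂ α₁₂ a b i =
      α₁ * bivPoissonTerm α₁ α₂ α₁₂ (a - 1) b i := by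
  have h := intCast_mul_poissonWeight α₁ (a - i)
  rw [sub_right_comm] at h
  unfold bivPoissonTerm
  linear_combination poissonWeight α₁₂ i * poissonWeight α₂ (b - i) * h

lemma natCast_mul_bivPoisson_fst (n : ℕ) (b : ℤ) :
    (n : ℝ) * bivPoisson α₁ α₂ α₁₂ n b =
      α₁ * bivPoisson α₁ α₂ α₁₂ (n - 1) b + α₁₂ * bivPoisson α₁ α₂ α₁₂ (n - 1) (b - 1) := by
  set t := bivPoissonTerm α₁ α₂ α₁₂
  have hsplit : (n : ℝ) * ∑ i ∈ range (n + 1), t n b i =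
      ∑ i ∈ range (n + 1), (i : ℝ) * t n b i +
        ∑ i ∈ range (n + 1), ((n - i : ℤ) : ℝ) * t n b i := by
    rw [mul_sum, ← sum_add_distrib]
    exact sum_congr rfl fun i _ => by push_cast; ring
  have hfst : ∑ i ∈ range (n + 1), (i : ℝ) * t n b i =
      α₁₂ * ∑ i ∈ range n, t (n - 1) (b - 1) i := by
    rw [sum_range_succ', Nat.cast_zero, zero_mul, add_zero, mul_sum]
    exact sum_congr rfl fun i _ => succ_mul_bivPoissonTerm_succ α₁ α₂ α₁₂ n b i
  have hsnd : ∑ i ∈ range (n + 1), ((n - i : ℤ) : ℝ) * t n b i =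
      α₁ * ∑ i ∈ range (n + 1), t (n - 1) b i := by
    rw [mul_sum]
    exact sum_congr rfl fun i _ => sub_mul_bivPoissonTerm α₁ α₂ α₁₂ n b i
  rw [bivPoisson_eq_sum_bivPoissonTerm α₁ α₂ α₁₂ b (R := n + 1) (by omega),
    bivPoisson_eq_sum_bivPoissonTerm α₁ α₂ α₁₂ b (R := n + 1) (by omega),
    bivPoisson_eq_sum_bivPoissonTerm α₁ α₂ α₁₂ (b - 1) (R := n) (by omega), ← mul_assoc, hsplit,
    hfst, hsnd]
  ring

lemma natCast_mul_bivPoisson_snd (a : ℤ) (n : ℕ) :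
    (n : ℝ) * bivPoisson α₁ α₂ α₁₂ a n =
      α₂ * bivPoisson α₁ α₂ α₁₂ a (n - 1) + α₁₂ * bivPoisson α₁ α₂ α₁₂ (a - 1) (n - 1) := by
  simpa only [bivPoisson_swap α₂ α₁ α₁₂ _ a, bivPoisson_swap α₂ α₁ α₁₂ _ (a - 1)] using
    natCast_mul_bivPoisson_fst α₂ α₁ α₁₂ n a

theorem bivPoisson_balance {k₁ k₂ d₁ d₂ : ℝ} (h₁₂ : k₁ = (d₁ + d₂) * α₁₂)
    (h₁ : d₁ * α₁ = k₂ + d₂ * α₁₂) (h₂ : d₂ * α₂ = d₁ * α₁₂) (n₁ n₂ : ℕ) :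
    let p := bivPoisson α₁ α₂ α₁₂
    k₁ * p (n₁ - 1) (n₂ - 1) + k₂ * p (n₁ - 1) n₂ + d₁ * (n₁ + 1) * p (n₁ + 1) n₂
        + d₂ * (n₂ + 1) * p n₁ (n₂ + 1)
      = (k₁ + k₂ + d₁ * n₁ + d₂ * n₂) * p n₁ n₂ := by
  intro p
  have up₁ := natCast_mul_bivPoisson_fst α₁ α₂ α₁₂ (n₁ + 1) n₂
  have up₂ := natCast_mul_bivPoisson_snd α₁ α₂ α₁₂ n₁ (n₂ + 1)
  have rec₁ := natCast_mul_bivPoisson_fst α₁ α₂ α₁₂ n₁ n₂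
  have rec₂ := natCast_mul_bivPoisson_snd α₁ α₂ α₁₂ n₁ n₂
  push_cast at up₁ up₂
  simp only [add_sub_cancel_right] at up₁ up₂
  linear_combination d₁ * up₁ + d₂ * up₂ - d₁ * rec₁ - d₂ * rec₂
    + p (n₁ - 1) (n₂ - 1) * h₁₂ - p (n₁ - 1) n₂ * h₁ - p n₁ (n₂ - 1) * h₂
    + p n₁ n₂ * (h₁ + h₂ - h₁₂)

end Recurrence

theorem stmt_13_general (k₁ k₂ d₁ d₂ : ℝ) (hd₁ : 0 < d₁) (hd₂ : 0 < d₂) :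
    let α₁ : ℝ := (k₂ * (d₁ + d₂) + k₁ * d₂) / (d₁ * (d₁ + d₂))
    let α₂ : ℝ := k₁ * d₁ / (d₂ * (d₁ + d₂))
    let α₁₂ : ℝ := k₁ / (d₁ + d₂)
    let p : ℤ → ℤ → ℝ := bivPoisson α₁ α₂ α₁₂
    ∀ n₁ n₂ : ℕ,
      k₁ * p ((n₁ : ℤ) - 1) ((n₂ : ℤ) - 1) + k₂ * p ((n₁ : ℤ) - 1) n₂
        + d₁ * ((n₁ : ℝ) + 1) * p ((n₁ : ℤ) + 1) n₂
        + d₂ * ((n₂ : ℝ) + 1) * p n₁ ((n₂ : ℤ) + 1)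
      = (k₁ + k₂ + d₁ * n₁ + d₂ * n₂) * p n₁ n₂ := by
  intro α₁ α₂ α₁₂ p
  have hd : d₁ + d₂ ≠ 0 := by positivity
  refine bivPoisson_balance α₁ α₂ α₁₂ ?_ ?_ ?_
  · simp only [α₁₂]
    field_simp
  · simp only [α₁, α₁₂]
    field_simp
  · simp only [α₂, α₁₂]
    field_simp

theorem stmt_13 (k₁ k₂ d₁ d₂ : ℝ) (hk₁ : 0 < k₁) (hk₂ : 0 < k₂)
    (hd₁ : 0 < d₁) (hd₂ : 0 < d₂) :
    let α₁ : ℝ := (k₂ * (d₁ + d₂) + k₁ * d₂) / (d₁ * (d₁ + d₂))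
    let α₂ : ℝ := k₁ * d₁ / (d₂ * (d₁ + d₂))
    let α₁₂ : ℝ := k₁ / (d₁ + d₂)
    let p : ℤ → ℤ → ℝ := bivPoisson α₁ α₂ α₁₂
    ∀ n₁ n₂ : ℕ,
      k₁ * p ((n₁ : ℤ) - 1) ((n₂ : ℤ) - 1) + k₂ * p ((n₁ : ℤ) - 1) n₂
        + d₁ * ((n₁ : ℝ) + 1) * p ((n₁ : ℤ) + 1) n₂
        + d₂ * ((n₂ : ℝ) + 1) * p n₁ ((n₂ : ℤ) + 1)
      = (k₁ + k₂ + d₁ * n₁ + d₂ * n₂) * p n₁ n₂ :=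
  stmt_13_general k₁ k₂ d₁ d₂ hd₁ hd₂
end

section
/- For positive reals μ₂, B, ν, the quantity ρ = √(μ₂B/((1+ν)(1+ν+(1+ν+μ₂)B))) satisfies 0 < ρ < 1 and is strictly increasing in B and in μ₂, and strictly decreasing in ν. -/
/-!
With `c = 1 + ν`, the squared correlation has the reciprocal
`1 / ρ² = c + c² (1 + 1/B) / μ₂`, which is visibly greater than `c > 1`, decreasing in `B` and
`μ₂`, and increasing in `c`; taking `√(·)⁻¹` reverses these monotonicities.
-/

lemma div_mul_add_eq_inv {μ B c : ℝ} (hμ : 0 < μ) (hB : 0 < B) (hc : 0 < c) :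
    μ * B / (c * (c + (c + μ) * B)) = (c + c ^ 2 * (1 + B⁻¹) / μ)⁻¹ := by
  field_simp
  ring

lemma Real.sqrt_inv_lt_sqrt_inv {x y : ℝ} (hx : 0 < x) (hxy : x < y) : √y⁻¹ < √x⁻¹ :=
  Real.sqrt_lt_sqrt (inv_pos.2 (hx.trans hxy)).le (inv_strictAnti₀ hx hxy)

theorem stmt_19 :
    let ρ : ℝ → ℝ → ℝ → ℝ := fun μ₂ B ν =>
      Real.sqrt (μ₂ * B / ((1 + ν) * (1 + ν + (1 + ν + μ₂) * B)))
    (∀ μ₂ B ν : ℝ, 0 < μ₂ → 0 < B → 0 < ν → 0 < ρ μ₂ B ν ∧ ρ μ₂ B ν < 1) ∧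
    (∀ μ₂ B B' ν : ℝ, 0 < μ₂ → 0 < B → 0 < B' → 0 < ν → B < B' → ρ μ₂ B ν < ρ μ₂ B' ν) ∧
    (∀ μ₂ μ₂' B ν : ℝ, 0 < μ₂ → 0 < μ₂' → 0 < B → 0 < ν → μ₂ < μ₂' → ρ μ₂ B ν < ρ μ₂' B ν) ∧
    (∀ μ₂ B ν ν' : ℝ, 0 < μ₂ → 0 < B → 0 < ν → 0 < ν' → ν < ν' → ρ μ₂ B ν' < ρ μ₂ B ν) := by
  intro ρ
  have hρ : ∀ μ₂ B ν : ℝ, 0 < μ₂ → 0 < B → 0 < ν →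
      ρ μ₂ B ν = √(1 + ν + (1 + ν) ^ 2 * (1 + B⁻¹) / μ₂)⁻¹ := fun μ₂ B ν hμ hB hν => by
    simp only [ρ, div_mul_add_eq_inv hμ hB (by linarith : (0 : ℝ) < 1 + ν)]
  refine ⟨fun μ₂ B ν hμ hB hν => ?_, fun μ₂ B B' ν hμ hB hB' hν hBB' => ?_,
    fun μ₂ μ₂' B ν hμ hμ' hB hν hμμ' => ?_, fun μ₂ B ν ν' hμ hB hν hν' hνν' => ?_⟩
  · rw [hρ μ₂ B ν hμ hB hν]
    refine ⟨by positivity, ?_⟩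
    have hgt : (1 : ℝ) < 1 + ν + (1 + ν) ^ 2 * (1 + B⁻¹) / μ₂ := by
      have : 0 < (1 + ν) ^ 2 * (1 + B⁻¹) / μ₂ := by positivity
      linarith
    simpa using Real.sqrt_inv_lt_sqrt_inv one_pos hgt
  · rw [hρ μ₂ B ν hμ hB hν, hρ μ₂ B' ν hμ hB' hν]
    exact Real.sqrt_inv_lt_sqrt_inv (by positivity) (by gcongr)
  · rw [hρ μ₂ B ν hμ hB hν, hρ μ₂' B ν hμ' hB hν]
    exact Real.sqrt_inv_lt_sqrt_inv (by positivity) (by gcongr)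
  · rw [hρ μ₂ B ν hμ hB hν, hρ μ₂ B ν' hμ hB hν']
    exact Real.sqrt_inv_lt_sqrt_inv (by positivity) (by gcongr)
end
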